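/- arXiv:1911.04050 — 3 statements merged into one kernel-verified Lean document; each statement's English description precedes it below -/
import Mathlib

section
/- Let h(ξ) = ∑_{|α|≤m} c_α (iξ)^α be a strongly elliptic symbol of even order m on ℝ^d. Then there exist constants λ > 0 and σ, ω ≥ 0 such that Re h(ξ + iη) ≥ λ|ξ|^m − σ|η|^m − ω for all ξ, η ∈ ℝ^d, where h is extended to ℂ^d as a polynomial. -/
/-!
Split `h(ξ + iη)` into the principal part `(-1)^{m/2} ∑_{|α| = m} c_α ξ^α`, whose real part is at
least `μ|ξ|^m`, and an error. Expanding the products `∏ (iξ_j - η_j)`, the error is bounded by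
monomials `|ξ|^a |η|^b` with `a < m` and `a + b ≤ m`, and each of these is at most
`ε|ξ|^m + C_ε (|η|^m + 1)`, by comparing `|ξ|` with `K max(|η|, 1)` for `K` large in terms of `ε`.
Taking `ε = μ/2` gives the estimate.
-/

open scoped BigOperators

/-- The polynomial symbol `h(z) = ∑_{|α| ≤ m} c_α (iz)^α` on `ℂ^d`, where a multi-index
`α` of length `n` is a function `Fin n → Fin d` and `(iz)^α = ∏ j (i z_{α j})`. -/
noncomputable def ellipticSymbolC (d m : ℕ) (c : (n : ℕ) → (Fin n → Fin d) → ℂ)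
    (z : Fin d → ℂ) : ℂ :=
  ∑ n ∈ Finset.range (m + 1), ∑ α : Fin n → Fin d,
    c n α * ∏ j, (Complex.I * z (α j))

open Finset Complex

def Subordinate (m : ℕ) (f : ℝ → ℝ → ℝ) : Prop :=
  ∀ ε > 0, ∃ C ≥ 0, ∀ u v, 0 ≤ u → 0 ≤ v → f u v ≤ ε * u ^ m + C * v ^ m + C

namespace Subordinate

variable {m : ℕ}

lemma zero : Subordinate m fun _ _ => 0 :=
  fun ε hε => ⟨0, le_rfl, fun u v hu _ => by simp only [zero_mul, add_zero]; positivity⟩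

lemma add {f g : ℝ → ℝ → ℝ} (hf : Subordinate m f) (hg : Subordinate m g) :
    Subordinate m fun u v => f u v + g u v := by
  intro ε hε
  obtain ⟨C₁, hC₁, hf⟩ := hf (ε / 2) (half_pos hε)
  obtain ⟨C₂, hC₂, hg⟩ := hg (ε / 2) (half_pos hε)
  refine ⟨C₁ + C₂, add_nonneg hC₁ hC₂, fun u v hu hv => ?_⟩
  linarith [hf u v hu hv, hg u v hu hv]

lemma sum {ι : Type*} (s : Finset ι) {f : ι → ℝ → ℝ → ℝ} (hf : ∀ i ∈ s, Subordinate m (f i)) :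
    Subordinate m fun u v => ∑ i ∈ s, f i u v := by
  classical
  induction s using Finset.induction_on with
  | empty => simpa using zero
  | insert i s hi ih =>
    simp only [sum_insert hi]
    exact (hf i (mem_insert_self i s)).add (ih fun j hj => hf j (mem_insert_of_mem hj))

lemma const_mul {f : ℝ → ℝ → ℝ} (hf : Subordinate m f) {a : ℝ} (ha : 0 ≤ a) :
    Subordinate m fun u v => a * f u v := by
  intro ε hε
  obtain ⟨C, hC, hf⟩ := hf (ε / (a + 1)) (by positivity)
  refine ⟨a * C, mul_nonneg ha hC, fun u v hu hv => ?_⟩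
  have hεa : a * (ε / (a + 1)) ≤ ε := by
    rw [mul_div_assoc', div_le_iff₀ (by positivity)]; nlinarith
  calc a * f u v ≤ a * (ε / (a + 1) * u ^ m + C * v ^ m + C) :=
        mul_le_mul_of_nonneg_left (hf u v hu hv) ha
    _ = a * (ε / (a + 1)) * u ^ m + a * C * v ^ m + a * C := by ring
    _ ≤ ε * u ^ m + a * C * v ^ m + a * C := by gcongr

end Subordinate

lemma exists_pow_mul_pow_le {a b : ℕ} (hb : 0 < b) {ε : ℝ} (hε : 0 < ε) :
    ∃ C ≥ 0, ∀ u w : ℝ, 0 ≤ u → 0 ≤ w → u ^ a * w ^ b ≤ ε * u ^ (a + b) + C * w ^ (a + b) := by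
  set K : ℝ := max 1 ε⁻¹
  have hK1 : 1 ≤ K := le_max_left _ _
  refine ⟨K ^ a, by positivity, fun u w hu hw => ?_⟩
  rcases le_total u (K * w) with h | h
  · calc u ^ a * w ^ b ≤ (K * w) ^ a * w ^ b := by gcongr
      _ = K ^ a * w ^ (a + b) := by ring
      _ ≤ ε * u ^ (a + b) + K ^ a * w ^ (a + b) := le_add_of_nonneg_left (by positivity)
  · have hεK : 1 ≤ ε * K ^ b := by
      calc (1 : ℝ) = ε * ε⁻¹ := (mul_inv_cancel₀ hε.ne').symm
        _ ≤ ε * K := by gcongr; exact le_max_right _ _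
        _ ≤ ε * K ^ b := by gcongr; exact le_self_pow₀ hK1 hb.ne'
    calc u ^ a * w ^ b ≤ u ^ a * w ^ b * (ε * K ^ b) := le_mul_of_one_le_right (by positivity) hεK
      _ = ε * (u ^ a * (K * w) ^ b) := by ring
      _ ≤ ε * (u ^ a * u ^ b) := by gcongr
      _ ≤ ε * u ^ (a + b) + K ^ a * w ^ (a + b) := by
        rw [← pow_add]; exact le_add_of_nonneg_right (by positivity)

lemma subordinate_pow_mul_pow {m a b : ℕ} (ha : a < m) (hab : a + b ≤ m) :
    Subordinate m fun u v => u ^ a * v ^ b := by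
  intro ε hε
  obtain ⟨C, hC, hle⟩ := exists_pow_mul_pow_le (a := a) (b := m - a) (by omega) hε
  refine ⟨C, hC, fun u v hu hv => ?_⟩
  have hw : 1 ≤ max v 1 := le_max_right _ _
  have hvw : v ^ b ≤ max v 1 ^ (m - a) :=
    (pow_le_pow_left₀ hv (le_max_left _ _) b).trans (pow_le_pow_right₀ hw (by omega))
  have hwm : max v 1 ^ m ≤ v ^ m + 1 := by
    rcases le_total v 1 with h | h
    · rw [max_eq_right h, one_pow]; linarith [pow_nonneg hv m]
    · rw [max_eq_left h]; linarith
  rw [show a + (m - a) = m by omega] at hle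
  calc u ^ a * v ^ b ≤ u ^ a * max v 1 ^ (m - a) := by gcongr
    _ ≤ ε * u ^ m + C * max v 1 ^ m := hle u _ hu (by positivity)
    _ ≤ ε * u ^ m + C * (v ^ m + 1) := by gcongr
    _ = ε * u ^ m + C * v ^ m + C := by ring

lemma subordinate_add_pow_sub_pow (m : ℕ) :
    Subordinate m fun u v => (u + v) ^ m - u ^ m := by
  have h : (fun u v : ℝ => (u + v) ^ m - u ^ m) =
      fun u v => ∑ k ∈ range m, (m.choose k : ℝ) * (u ^ k * v ^ (m - k)) := by
    funext u v
    rw [add_pow, sum_range_succ, Nat.choose_self, Nat.sub_self]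
    simp only [pow_zero, mul_one, Nat.cast_one, add_sub_cancel_right]
    exact sum_congr rfl fun k _ => by ring
  rw [h]
  refine Subordinate.sum _ fun k hk => ?_
  have hk := mem_range.1 hk
  exact (subordinate_pow_mul_pow hk (by omega)).const_mul (Nat.cast_nonneg _)

lemma subordinate_add_pow {m n : ℕ} (hn : n < m) : Subordinate m fun u v => (u + v) ^ n := by
  simp_rw [add_pow]
  exact Subordinate.sum _ fun k hk => by
    have hk := mem_range.1 hk
    simpa only [mul_comm _ (n.choose k : ℝ)] using
      (subordinate_pow_mul_pow (a := k) (b := n - k) (by omega) (by omega)).const_mul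
        (Nat.cast_nonneg (n.choose k))

lemma norm_prod_le_pow_card {ι R : Type*} [NormedCommRing R] [NormOneClass R] (s : Finset ι)
    {f : ι → R} {u : ℝ} (h : ∀ i ∈ s, ‖f i‖ ≤ u) : ‖∏ i ∈ s, f i‖ ≤ u ^ #s :=
  (Finset.norm_prod_le s f).trans
    ((prod_le_prod (fun _ _ => norm_nonneg _) h).trans_eq (prod_const u))

lemma norm_prod_add_sub_prod_le {ι R : Type*} [NormedCommRing R] [NormOneClass R]
    (s : Finset ι) {a b : ι → R} {u v : ℝ} (ha : ∀ i ∈ s, ‖a i‖ ≤ u) (hb : ∀ i ∈ s, ‖b i‖ ≤ v) :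
    ‖∏ i ∈ s, (a i + b i) - ∏ i ∈ s, a i‖ ≤ (u + v) ^ #s - u ^ #s := by
  classical
  induction s using Finset.induction_on with
  | empty => simp
  | insert i s hi ih =>
    have ha' := fun j hj => ha j (mem_insert_of_mem hj)
    have hb' := fun j hj => hb j (mem_insert_of_mem hj)
    have hai := ha i (mem_insert_self i s)
    have hbi := hb i (mem_insert_self i s)
    have hu : 0 ≤ u := (norm_nonneg _).trans hai
    have hv : 0 ≤ v := (norm_nonneg _).trans hbi
    rw [prod_insert hi, prod_insert hi, card_insert_of_notMem hi,
      show (a i + b i) * ∏ j ∈ s, (a j + b j) - a i * ∏ j ∈ s, a j =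
        (a i + b i) * (∏ j ∈ s, (a j + b j) - ∏ j ∈ s, a j) + b i * ∏ j ∈ s, a j by ring]
    calc _ ≤ (u + v) * ((u + v) ^ #s - u ^ #s) + v * u ^ #s := by
          refine (norm_add_le _ _).trans (add_le_add ?_ ?_) <;> refine (norm_mul_le _ _).trans ?_
          · exact mul_le_mul ((norm_add_le _ _).trans (add_le_add hai hbi)) (ih ha' hb')
              (norm_nonneg _) (by positivity)
          · exact mul_le_mul hbi (norm_prod_le_pow_card s ha') (norm_nonneg _) hv
      _ = (u + v) ^ (#s + 1) - u ^ (#s + 1) := by ring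

lemma norm_sum_mul_le {ι R : Type*} [SeminormedRing R] (s : Finset ι) (c x : ι → R) {B : ℝ}
    (h : ∀ i ∈ s, ‖x i‖ ≤ B) : ‖∑ i ∈ s, c i * x i‖ ≤ (∑ i ∈ s, ‖c i‖) * B := by
  refine (norm_sum_le _ _).trans ?_
  rw [sum_mul]
  exact sum_le_sum fun i hi =>
    (norm_mul_le _ _).trans (mul_le_mul_of_nonneg_left (h i hi) (norm_nonneg _))

lemma Complex.I_pow_of_even {m : ℕ} (hm : Even m) : I ^ m = (-1) ^ (m / 2) := by
  obtain ⟨k, rfl⟩ := hm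
  rw [← two_mul, pow_mul, I_sq, Nat.mul_div_cancel_left k two_pos]

lemma norm_ellipticSymbolC_sub_le (d m : ℕ) (hm : Even m) (c : (n : ℕ) → (Fin n → Fin d) → ℂ)
    (ξ η : EuclideanSpace ℝ (Fin d)) :
    ‖ellipticSymbolC d m c (fun i => (ξ i : ℂ) + I * (η i : ℂ)) -
        (-1) ^ (m / 2) * ∑ α : Fin m → Fin d, c m α * ∏ j, (ξ (α j) : ℂ)‖ ≤
      ∑ n ∈ range m, (∑ α : Fin n → Fin d, ‖c n α‖) * (‖ξ‖ + ‖η‖) ^ n +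
        (∑ α : Fin m → Fin d, ‖c m α‖) * ((‖ξ‖ + ‖η‖) ^ m - ‖ξ‖ ^ m) := by
  have hξ (k : Fin d) : ‖I * (ξ k : ℂ)‖ ≤ ‖ξ‖ := by
    simpa only [norm_mul, norm_I, one_mul, norm_real] using PiLp.norm_apply_le ξ k
  have hη (k : Fin d) : ‖-(η k : ℂ)‖ ≤ ‖η‖ := by
    simpa only [norm_neg, norm_real] using PiLp.norm_apply_le η k
  have hz (k : Fin d) : I * ((ξ k : ℂ) + I * η k) = I * ξ k + -(η k : ℂ) := by
    rw [mul_add, ← mul_assoc, I_mul_I]; ring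
  have hprincipal : (-1) ^ (m / 2) * ∑ α : Fin m → Fin d, c m α * ∏ j, (ξ (α j) : ℂ) =
      ∑ α : Fin m → Fin d, c m α * ∏ j, (I * ξ (α j)) := by
    rw [mul_sum]
    refine sum_congr rfl fun α _ => ?_
    rw [prod_mul_distrib, prod_const, card_univ, Fintype.card_fin, I_pow_of_even hm]
    ring
  rw [ellipticSymbolC, sum_range_succ, hprincipal, add_sub_assoc, ← sum_sub_distrib]
  simp_rw [← mul_sub, hz]
  refine (norm_add_le _ _).trans (add_le_add ?_ ?_)
  · refine (norm_sum_le _ _).trans (sum_le_sum fun n _ => norm_sum_mul_le _ _ _ fun α _ => ?_)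
    simpa using norm_prod_le_pow_card univ fun j _ =>
      (norm_add_le _ _).trans (add_le_add (hξ (α j)) (hη (α j)))
  · refine norm_sum_mul_le _ _ _ fun α _ => ?_
    simpa using norm_prod_add_sub_prod_le univ (fun j _ => hξ (α j)) (fun j _ => hη (α j))

theorem stmt7_general (d m : ℕ) (hme : Even m)
    (c : (n : ℕ) → (Fin n → Fin d) → ℂ) (μ : ℝ) (hμ : 0 < μ)
    (hell : ∀ ξ : EuclideanSpace ℝ (Fin d),
      μ * ‖ξ‖ ^ m ≤
        ((-1 : ℂ) ^ (m / 2) *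
          ∑ α : Fin m → Fin d, c m α * ∏ j, (ξ (α j) : ℂ)).re) :
    ∃ lam > (0 : ℝ), ∃ σ ≥ (0 : ℝ), ∃ ω ≥ (0 : ℝ),
      ∀ ξ η : EuclideanSpace ℝ (Fin d),
        lam * ‖ξ‖ ^ m - σ * ‖η‖ ^ m - ω ≤
          (ellipticSymbolC d m c (fun i => (ξ i : ℂ) + Complex.I * (η i : ℂ))).re := by
  have hA (n : ℕ) : 0 ≤ ∑ α : Fin n → Fin d, ‖c n α‖ := sum_nonneg fun _ _ => norm_nonneg _
  have hsub : Subordinate m fun u v =>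
      ∑ n ∈ range m, (∑ α : Fin n → Fin d, ‖c n α‖) * (u + v) ^ n +
        (∑ α : Fin m → Fin d, ‖c m α‖) * ((u + v) ^ m - u ^ m) :=
    (Subordinate.sum _ fun n hn => (subordinate_add_pow (mem_range.1 hn)).const_mul (hA n)).add
      ((subordinate_add_pow_sub_pow m).const_mul (hA m))
  obtain ⟨C, hC, hbound⟩ := hsub (μ / 2) (half_pos hμ)
  refine ⟨μ / 2, half_pos hμ, C, hC, C, hC, fun ξ η => ?_⟩
  have herr := (abs_le.1 ((abs_re_le_norm _).trans (norm_ellipticSymbolC_sub_le d m hme c ξ η))).1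
  rw [sub_re] at herr
  linarith [hbound ‖ξ‖ ‖η‖ (norm_nonneg _) (norm_nonneg _), hell ξ]

theorem stmt7 (d m : ℕ) (hm : 0 < m) (hme : Even m)
    (c : (n : ℕ) → (Fin n → Fin d) → ℂ) (μ : ℝ) (hμ : 0 < μ)
    (hell : ∀ ξ : EuclideanSpace ℝ (Fin d),
      μ * ‖ξ‖ ^ m ≤
        ((-1 : ℂ) ^ (m / 2) *
          ∑ α : Fin m → Fin d, c m α * ∏ j, (ξ (α j) : ℂ)).re) :
    ∃ lam > (0 : ℝ), ∃ σ ≥ (0 : ℝ), ∃ ω ≥ (0 : ℝ),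
      ∀ ξ η : EuclideanSpace ℝ (Fin d),
        lam * ‖ξ‖ ^ m - σ * ‖η‖ ^ m - ω ≤
          (ellipticSymbolC d m c (fun i => (ξ i : ℂ) + Complex.I * (η i : ℂ))).re :=
  stmt7_general d m hme c μ hμ hell
end

section
/- Let K : ℝ^d → ℂ satisfy the Gaussian bound |K(x)| ≤ a t^{−(d+k)/m} e^{ω t} e^{−b(|x|^m/t)^{1/(m−1)}} for fixed t > 0 and constants a, b > 0, ω ≥ 0, m > 1, k ≥ 0. Then for every ρ ≥ 0, ∫_{ℝ^d} |K(x)| e^{ρ|x|} dx ≤ a' t^{−k/m} e^{ω'(1+ρ^m)t} for constants a', ω' > 0 depending only on a, b, ω, m, d, k. -/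
open MeasureTheory Module

/-!
Young's inequality, applied after rescaling `ρ ↦ ρ t^{1/m}`, `r ↦ r t^{-1/m}`, gives
`ρ r ≤ (b/2) (r^m/t)^{1/(m-1)} + C ρ^m t`. Hence the weight `e^{ρ|x|}` costs a factor
`e^{C ρ^m t}` and half of the Gaussian decay. What is left, `e^{-(b/2)(|x|^m/t)^{1/(m-1)}}`, is the
dilate by `t^{1/m}` of the integrable profile `e^{-(b/2)|y|^{m/(m-1)}}`, so its integral is
`t^{d/m}` times a constant, and `t^{-(d+k)/m} t^{d/m} = t^{-k/m}`.
-/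

theorem exists_mul_le_mul_rpow_add_mul_rpow {p q : ℝ} (hpq : p.HolderConjugate q) {b : ℝ}
    (hb : 0 < b) : ∃ C > 0, ∀ u ≥ (0 : ℝ), ∀ v ≥ (0 : ℝ), u * v ≤ b * v ^ q + C * u ^ p := by
  have hq : 0 < q := hpq.symm.pos
  have hbq : 0 < b * q := mul_pos hb hq
  set l := (b * q) ^ (-1 / q)
  have hl : 0 < l := Real.rpow_pos_of_pos hbq _
  have hlq : l ^ q = (b * q)⁻¹ := by
    rw [← Real.rpow_mul hbq.le, div_mul_cancel₀ _ hq.ne', Real.rpow_neg_one]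
  refine ⟨l ^ p / p, div_pos (Real.rpow_pos_of_pos hl _) hpq.pos, fun u hu v hv => ?_⟩
  -- `l` is chosen so that Young's inequality for `l * u` and `v / l` gives `v ^ q` the weight `b`
  have young := Real.young_inequality_of_nonneg (mul_nonneg hl.le hu) (div_nonneg hv hl.le) hpq
  rw [Real.mul_rpow hl.le hu, Real.div_rpow hv hl.le, hlq] at young
  calc u * v = l * u * (v / l) := by field_simp
    _ ≤ _ := young
    _ = b * v ^ q + l ^ p / p * u ^ p := by field_simp; ring

theorem div_rpow_one_div_rpow {m t r : ℝ} (hm : 1 < m) (ht : 0 < t) (hr : 0 ≤ r) :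
    (r / t ^ (1 / m)) ^ (m / (m - 1)) = (r ^ m / t) ^ (1 / (m - 1)) := by
  have hm' : m - 1 ≠ 0 := (sub_pos.2 hm).ne'
  rw [Real.div_rpow hr (Real.rpow_nonneg ht.le _), Real.div_rpow (Real.rpow_nonneg hr _) ht.le,
    ← Real.rpow_mul ht.le, ← Real.rpow_mul hr]
  congr 2 <;> field_simp

theorem exists_mul_le_mul_rpow_div_rpow_add {b m : ℝ} (hb : 0 < b) (hm : 1 < m) :
    ∃ C > 0, ∀ t > (0 : ℝ), ∀ ρ ≥ (0 : ℝ), ∀ r ≥ (0 : ℝ),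
      ρ * r ≤ b * (r ^ m / t) ^ (1 / (m - 1)) + C * ρ ^ m * t := by
  have hpq : m.HolderConjugate (m / (m - 1)) := .conjExponent hm
  obtain ⟨C, hC, young⟩ := exists_mul_le_mul_rpow_add_mul_rpow hpq hb
  refine ⟨C, hC, fun t ht ρ hρ r hr => ?_⟩
  have htm : 0 < t ^ (1 / m) := Real.rpow_pos_of_pos ht _
  have hρt : (ρ * t ^ (1 / m)) ^ m = ρ ^ m * t := by
    rw [Real.mul_rpow hρ htm.le, ← Real.rpow_mul ht.le, one_div_mul_cancel (by linarith),
      Real.rpow_one]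
  have hρr : ρ * t ^ (1 / m) * (r / t ^ (1 / m)) = ρ * r := by field_simp
  have := young _ (mul_nonneg hρ htm.le) _ (div_nonneg hr htm.le)
  rwa [hρr, div_rpow_one_div_rpow hm ht hr, hρt, ← mul_assoc] at this

theorem mul_exp_le_mul_exp_mul_exp_neg {y A b c S x D : ℝ} (hA : 0 ≤ A)
    (hy : y ≤ A * Real.exp (-b * S)) (hx : x - b * S ≤ D - c * S) :
    y * Real.exp x ≤ A * Real.exp D * Real.exp (-c * S) :=
  calc y * Real.exp x ≤ A * Real.exp (-b * S) * Real.exp x := by gcongr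
    _ = A * Real.exp (x - b * S) := by rw [mul_assoc, ← Real.exp_add]; ring_nf
    _ ≤ A * Real.exp (D - c * S) := by gcongr
    _ = A * Real.exp D * Real.exp (-c * S) := by rw [mul_assoc, ← Real.exp_add]; ring_nf

theorem exp_neg_mul_norm_rpow_div_rpow_eq_comp_inv_smul {E : Type*} [NormedAddCommGroup E]
    [NormedSpace ℝ E] {c m t : ℝ} (hm : 1 < m) (ht : 0 < t) :
    (fun x : E => Real.exp (-c * (‖x‖ ^ m / t) ^ (1 / (m - 1)))) =
      fun x => Real.exp (-c * ‖(t ^ (1 / m))⁻¹ • x‖ ^ (m / (m - 1))) := by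
  ext x
  rw [norm_smul, norm_inv, Real.norm_of_nonneg (Real.rpow_nonneg ht.le _), inv_mul_eq_div,
    div_rpow_one_div_rpow hm ht (norm_nonneg x)]

section AddHaar

variable {E : Type*} [NormedAddCommGroup E] [NormedSpace ℝ E] [FiniteDimensional ℝ E]
  [MeasurableSpace E] [BorelSpace E] (μ : Measure E) [μ.IsAddHaarMeasure] {c m t : ℝ}

theorem integrable_exp_neg_mul_norm_rpow {p : ℝ} (hc : 0 < c) (hp : 0 < p) :
    Integrable (fun x : E => Real.exp (-c * ‖x‖ ^ p)) μ := by
  obtain hE | hE := subsingleton_or_nontrivial E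
  · exact (integrable_const _).congr (.of_forall fun x => by rw [Subsingleton.elim x 0])
  · rw [integrable_fun_norm_addHaar μ (f := fun r => Real.exp (-c * r ^ p))]
    refine (integrableOn_rpow_mul_exp_neg_mul_rpow (s := (finrank ℝ E - 1 : ℕ))
      (neg_one_lt_zero.trans_le (Nat.cast_nonneg _)) hp hc).congr_fun
      (fun r _ => by simp [Real.rpow_natCast]) measurableSet_Ioi

theorem integrable_exp_neg_mul_norm_rpow_div_rpow (hc : 0 < c) (hm : 1 < m) (ht : 0 < t) :
    Integrable (fun x : E => Real.exp (-c * (‖x‖ ^ m / t) ^ (1 / (m - 1)))) μ := by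
  rw [exp_neg_mul_norm_rpow_div_rpow_eq_comp_inv_smul hm ht]
  exact (integrable_exp_neg_mul_norm_rpow μ hc (div_pos (by linarith) (by linarith))).comp_smul
    (inv_ne_zero (Real.rpow_pos_of_pos ht _).ne')

theorem integral_exp_neg_mul_norm_rpow_div_rpow (hm : 1 < m) (ht : 0 < t) :
    ∫ x : E, Real.exp (-c * (‖x‖ ^ m / t) ^ (1 / (m - 1))) ∂μ =
      t ^ (finrank ℝ E / m : ℝ) * ∫ y : E, Real.exp (-c * ‖y‖ ^ (m / (m - 1))) ∂μ := by
  rw [exp_neg_mul_norm_rpow_div_rpow_eq_comp_inv_smul hm ht,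
    Measure.integral_comp_inv_smul μ (fun y => Real.exp (-c * ‖y‖ ^ (m / (m - 1)))),
    smul_eq_mul, abs_of_nonneg (pow_nonneg (Real.rpow_nonneg ht.le _) _), ← Real.rpow_natCast,
    ← Real.rpow_mul ht.le, one_div_mul_eq_div]

end AddHaar

theorem stmt10_general (d : ℕ) (a b ω m k : ℝ)
    (ha : 0 < a) (hb : 0 < b) (hm : 1 < m) :
    ∃ a' > (0 : ℝ), ∃ ω' > (0 : ℝ), ∀ t > (0 : ℝ),
      ∀ K : EuclideanSpace ℝ (Fin d) → ℂ,
        (∀ x, ‖K x‖ ≤ a * t ^ (-(((d : ℝ) + k) / m)) * Real.exp (ω * t) *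
          Real.exp (-b * ((‖x‖ ^ m / t) ^ (1 / (m - 1))))) →
        ∀ ρ ≥ (0 : ℝ),
          ∫ x : EuclideanSpace ℝ (Fin d), ‖K x‖ * Real.exp (ρ * ‖x‖) ≤
            a' * t ^ (-(k / m)) * Real.exp (ω' * (1 + ρ ^ m) * t) := by
  obtain ⟨C, hC, absorb⟩ := exists_mul_le_mul_rpow_div_rpow_add (half_pos hb) hm
  set I := ∫ y : EuclideanSpace ℝ (Fin d), Real.exp (-(b / 2) * ‖y‖ ^ (m / (m - 1)))
  have hI : 0 ≤ I := integral_nonneg fun y => (Real.exp_pos _).le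
  refine ⟨a * (I + 1), by positivity, max ω C, lt_max_of_lt_right hC,
    fun t ht K hK ρ hρ => ?_⟩
  set A := a * t ^ (-(((d : ℝ) + k) / m)) * Real.exp (ω * t)
  have hA : 0 ≤ A := by positivity
  have hexp : ω * t + C * ρ ^ m * t ≤ max ω C * (1 + ρ ^ m) * t := by
    have := Real.rpow_nonneg hρ m
    calc ω * t + C * ρ ^ m * t ≤ max ω C * t + max ω C * ρ ^ m * t := by
          gcongr
          exacts [le_max_left ω C, le_max_right ω C]
      _ = max ω C * (1 + ρ ^ m) * t := by ring
  have htk : t ^ (-(((d : ℝ) + k) / m)) * t ^ ((d : ℝ) / m) = t ^ (-(k / m)) := by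
    rw [← Real.rpow_add ht]; ring_nf
  calc ∫ x, ‖K x‖ * Real.exp (ρ * ‖x‖)
      ≤ ∫ x, A * Real.exp (C * ρ ^ m * t) *
          Real.exp (-(b / 2) * (‖x‖ ^ m / t) ^ (1 / (m - 1))) := by
        refine integral_mono_of_nonneg (.of_forall fun x => by positivity)
          ((integrable_exp_neg_mul_norm_rpow_div_rpow _ (half_pos hb) hm ht).const_mul _)
          (.of_forall fun x => mul_exp_le_mul_exp_mul_exp_neg hA (hK x) ?_)
        linarith [absorb t ht ρ hρ ‖x‖ (norm_nonneg x)]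
    _ = a * I * t ^ (-(k / m)) * Real.exp (ω * t + C * ρ ^ m * t) := by
        rw [integral_const_mul, integral_exp_neg_mul_norm_rpow_div_rpow _ hm ht,
          finrank_euclideanSpace_fin, ← htk, Real.exp_add]
        ring
    _ ≤ a * (I + 1) * t ^ (-(k / m)) * Real.exp (max ω C * (1 + ρ ^ m) * t) := by
        gcongr; linarith

theorem stmt10 (d : ℕ) (a b ω m k : ℝ)
    (ha : 0 < a) (hb : 0 < b) (hω : 0 ≤ ω) (hm : 1 < m) (hk : 0 ≤ k) :
    ∃ a' > (0 : ℝ), ∃ ω' > (0 : ℝ), ∀ t > (0 : ℝ),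
      ∀ K : EuclideanSpace ℝ (Fin d) → ℂ,
        (∀ x, ‖K x‖ ≤ a * t ^ (-(((d : ℝ) + k) / m)) * Real.exp (ω * t) *
          Real.exp (-b * ((‖x‖ ^ m / t) ^ (1 / (m - 1))))) →
        ∀ ρ ≥ (0 : ℝ),
          ∫ x : EuclideanSpace ℝ (Fin d), ‖K x‖ * Real.exp (ρ * ‖x‖) ≤
            a' * t ^ (-(k / m)) * Real.exp (ω' * (1 + ρ ^ m) * t) :=
  stmt10_general d a b ω m k ha hb hm
end

section
/- Let K_t, t > 0, satisfy the convolution semigroup property K_{s+t} = K_s * K_t on ℝ^d with ∫ |K_t(y)| e^{ρ|y|} dy ≤ a e^{ω(1+ρ^m)t}, and let U be a strongly continuous representation of ℝ^d on a Banach space χ with ‖U(y)‖ ≤ M e^{ρ|y|}. Then the operators S_t φ = ∫_{ℝ^d} K_t(y) U(y) φ dy (weak integral) are well-defined bounded operators satisfying ‖S_t‖ ≤ a M e^{ω(1+ρ^m)t} and form a semigroup: S_s S_t = S_{s+t} for all s, t > 0. -/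
/-!
The integrand `K t y • U y φ` is dominated by `M ‖φ‖ ‖K t y‖ w y` with `w y = exp (ρ ‖y‖)`,
which gives integrability and the norm bound. For the semigroup law, `U y` passes inside the
integral defining `S t φ`, and the substitution `z = x - y` turns `S s (S t φ)` into the double
integral of `(K s y * K t (x - y)) • U x φ`. Since `‖U x‖ ≤ ‖U y‖ ‖U (x - y)‖` by the group law,
this integrand is dominated by the convolution integrand of the two weighted `L¹` functions
`‖K s‖ w` and `‖K t‖ w`, so Fubini applies and the inner integral is `K (s + t) x`.
-/

open MeasureTheory

section WeightedLintegral

variable {α F : Type*} [NormedAddCommGroup F] {f : α → F} {g : α → ℝ} {C : ℝ}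

lemma ofReal_norm_mul_eq (x : α) :
    ENNReal.ofReal (‖f x‖ * g x) = ‖f x‖₊ * ENNReal.ofReal (g x) := by
  rw [ENNReal.ofReal_mul (norm_nonneg _), ofReal_norm, enorm_eq_nnnorm]

variable [MeasurableSpace α] {μ : Measure α}

lemma integrable_norm_mul_of_lintegral_le (hf : AEStronglyMeasurable f μ)
    (hg : AEStronglyMeasurable g μ) (hg0 : ∀ x, 0 ≤ g x)
    (h : ∫⁻ x, ‖f x‖₊ * ENNReal.ofReal (g x) ∂μ ≤ ENNReal.ofReal C) :
    Integrable (fun x => ‖f x‖ * g x) μ := by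
  refine ⟨hf.norm.mul hg, ?_⟩
  simp_rw [HasFiniteIntegral, Real.enorm_eq_ofReal (mul_nonneg (norm_nonneg _) (hg0 _)),
    ofReal_norm_mul_eq]
  exact h.trans_lt ENNReal.ofReal_lt_top

lemma integral_norm_mul_le_of_lintegral_le (hf : AEStronglyMeasurable f μ)
    (hg : AEStronglyMeasurable g μ) (hg0 : ∀ x, 0 ≤ g x) (hC : 0 ≤ C)
    (h : ∫⁻ x, ‖f x‖₊ * ENNReal.ofReal (g x) ∂μ ≤ ENNReal.ofReal C) :
    ∫ x, ‖f x‖ * g x ∂μ ≤ C := by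
  rw [integral_eq_lintegral_of_nonneg_ae
    (ae_of_all _ fun x => mul_nonneg (norm_nonneg _) (hg0 x)) (hf.norm.mul hg)]
  simp_rw [ofReal_norm_mul_eq]
  exact ENNReal.toReal_le_of_le_ofReal hC h

end WeightedLintegral

section Transference

variable {G E : Type*} [NormedAddCommGroup E] [NormedSpace ℂ E]
  {U : G → E →L[ℂ] E} {w : G → ℝ} {M : ℝ}

lemma norm_smul_apply_le (hUw : ∀ y, ‖U y‖ ≤ M * w y) (k : G → ℂ) (φ : E) (y : G) :
    ‖k y • U y φ‖ ≤ M * ‖φ‖ * (‖k y‖ * w y) :=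
  calc ‖k y • U y φ‖ ≤ ‖k y‖ * (‖U y‖ * ‖φ‖) := by
        rw [norm_smul]; gcongr; exact (U y).le_opNorm φ
    _ ≤ ‖k y‖ * (M * w y * ‖φ‖) := by gcongr; exact hUw y
    _ = M * ‖φ‖ * (‖k y‖ * w y) := by ring

lemma norm_convolution_smul_apply_le [AddCommGroup G]
    (hUadd : ∀ y z, U (y + z) = (U y).comp (U z))
    (hUw : ∀ y, ‖U y‖ ≤ M * w y) (k₁ k₂ : G → ℂ) (φ : E) (x y : G) :
    ‖(k₁ y * k₂ (x - y)) • U x φ‖ ≤ M ^ 2 * ‖φ‖ * ((‖k₁ y‖ * w y) * (‖k₂ (x - y)‖ * w (x - y))) := by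
  have hUx : ‖U x‖ ≤ M * w y * (M * w (x - y)) :=
    calc ‖U x‖ = ‖(U y).comp (U (x - y))‖ := by rw [← hUadd, add_sub_cancel]
      _ ≤ ‖U y‖ * ‖U (x - y)‖ := (U y).opNorm_comp_le _
      _ ≤ M * w y * (M * w (x - y)) :=
        mul_le_mul (hUw y) (hUw _) (norm_nonneg _) ((norm_nonneg _).trans (hUw y))
  calc ‖(k₁ y * k₂ (x - y)) • U x φ‖ ≤ ‖k₁ y‖ * ‖k₂ (x - y)‖ * (‖U x‖ * ‖φ‖) := by
        rw [norm_smul, norm_mul]; gcongr; exact (U x).le_opNorm φ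
    _ ≤ ‖k₁ y‖ * ‖k₂ (x - y)‖ * (M * w y * (M * w (x - y)) * ‖φ‖) := by gcongr
    _ = _ := by ring

variable [MeasurableSpace G] {μ : Measure G}

lemma integrable_smul_apply {k : G → ℂ} (hk : AEStronglyMeasurable k μ)
    (hkw : Integrable (fun y => ‖k y‖ * w y) μ) (hUw : ∀ y, ‖U y‖ ≤ M * w y) {φ : E}
    (hU : StronglyMeasurable fun y => U y φ) :
    Integrable (fun y => k y • U y φ) μ :=
  (hkw.const_mul (M * ‖φ‖)).mono' (hk.smul hU.aestronglyMeasurable)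
    (ae_of_all _ (norm_smul_apply_le hUw k φ))

lemma norm_integral_smul_apply_le {k : G → ℂ} (hkw : Integrable (fun y => ‖k y‖ * w y) μ)
    (hUw : ∀ y, ‖U y‖ ≤ M * w y) (φ : E) :
    ‖∫ y, k y • U y φ ∂μ‖ ≤ M * (∫ y, ‖k y‖ * w y ∂μ) * ‖φ‖ := by
  calc ‖∫ y, k y • U y φ ∂μ‖ ≤ ∫ y, M * ‖φ‖ * (‖k y‖ * w y) ∂μ :=
        norm_integral_le_of_norm_le (hkw.const_mul _) (ae_of_all _ (norm_smul_apply_le hUw k φ))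
    _ = M * (∫ y, ‖k y‖ * w y ∂μ) * ‖φ‖ := by rw [integral_const_mul]; ring

variable [AddCommGroup G] [μ.IsAddRightInvariant]

lemma apply_integral_smul_apply [MeasurableAdd G] [CompleteSpace E]
    (hUadd : ∀ y z, U (y + z) = (U y).comp (U z)) {k : G → ℂ}
    {φ : E} (hint : Integrable (fun z => k z • U z φ) μ) (y : G) :
    U y (∫ z, k z • U z φ ∂μ) = ∫ x, k (x - y) • U x φ ∂μ := by
  have hshift : ∀ x, U y (U (x - y) φ) = U x φ := fun x => by
    rw [← ContinuousLinearMap.comp_apply, ← hUadd, add_sub_cancel]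
  rw [← (U y).integral_comp_comm hint, ← integral_sub_right_eq_self _ y]
  simp_rw [map_smul, hshift]

variable [MeasurableAdd₂ G] [MeasurableNeg G] [SFinite μ]

lemma integrable_convolution_smul_apply (hUadd : ∀ y z, U (y + z) = (U y).comp (U z))
    (hUw : ∀ y, ‖U y‖ ≤ M * w y) {k₁ k₂ : G → ℂ} (hk₁ : AEStronglyMeasurable k₁ μ)
    (hk₂ : AEStronglyMeasurable k₂ μ) (hk₁w : Integrable (fun y => ‖k₁ y‖ * w y) μ)
    (hk₂w : Integrable (fun y => ‖k₂ y‖ * w y) μ) {φ : E}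
    (hU : StronglyMeasurable fun y => U y φ) :
    Integrable (fun p : G × G => (k₁ p.2 * k₂ (p.1 - p.2)) • U p.1 φ) (μ.prod μ) := by
  have hdom := (hk₁w.convolution_integrand (ContinuousLinearMap.mul ℝ ℝ) hk₂w).const_mul
    (M ^ 2 * ‖φ‖)
  have hmeas := hk₁.convolution_integrand (ContinuousLinearMap.mul ℂ ℂ) hk₂ (μ := μ)
  refine hdom.mono' (hmeas.smul (hU.comp_measurable measurable_fst).aestronglyMeasurable) ?_
  exact ae_of_all _ fun p => norm_convolution_smul_apply_le hUadd hUw k₁ k₂ φ p.1 p.2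

theorem integral_smul_apply_integral_smul_apply [CompleteSpace E]
    (hUadd : ∀ y z, U (y + z) = (U y).comp (U z))
    (hUw : ∀ y, ‖U y‖ ≤ M * w y) {k₁ k₂ : G → ℂ} (hk₁ : AEStronglyMeasurable k₁ μ)
    (hk₂ : AEStronglyMeasurable k₂ μ) (hk₁w : Integrable (fun y => ‖k₁ y‖ * w y) μ)
    (hk₂w : Integrable (fun y => ‖k₂ y‖ * w y) μ) {φ : E}
    (hU : StronglyMeasurable fun y => U y φ) :
    ∫ y, k₁ y • U y (∫ z, k₂ z • U z φ ∂μ) ∂μ =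
      ∫ x, (∫ y, k₁ y * k₂ (x - y) ∂μ) • U x φ ∂μ := by
  have hint := integrable_smul_apply hk₂ hk₂w hUw hU
  simp_rw [apply_integral_smul_apply hUadd hint, ← integral_smul, smul_smul, ← integral_smul_const]
  exact (integral_integral_swap (f := fun x y => (k₁ y * k₂ (x - y)) • U x φ)
    (integrable_convolution_smul_apply hUadd hUw hk₁ hk₂ hk₁w hk₂w hU)).symm

end Transference

theorem stmt12_general {χ : Type*} [NormedAddCommGroup χ] [NormedSpace ℂ χ] [CompleteSpace χ]
    (d : ℕ) (m a ω ρ M : ℝ)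
    (ha : 0 < a)
    (K : ℝ → EuclideanSpace ℝ (Fin d) → ℂ)
    (hKmeas : ∀ t > (0 : ℝ), Measurable (K t))
    -- convolution semigroup property
    (hKconv : ∀ s > (0 : ℝ), ∀ t > (0 : ℝ), ∀ x,
      K (s + t) x = ∫ z, K s z * K t (x - z))
    -- weighted L¹ bound
    (hKint : ∀ t > (0 : ℝ),
      ∫⁻ y, (‖K t y‖₊ : ENNReal) * ENNReal.ofReal (Real.exp (ρ * ‖y‖)) ≤
        ENNReal.ofReal (a * Real.exp (ω * (1 + ρ ^ m) * t)))
    -- strongly continuous representation of ℝ^d with exponential growth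
    (U : EuclideanSpace ℝ (Fin d) → χ →L[ℂ] χ)
    (hUadd : ∀ y z, U (y + z) = (U y).comp (U z))
    (hUcont : ∀ φ : χ, Continuous fun y => U y φ)
    (hUnorm : ∀ y, ‖U y‖ ≤ M * Real.exp (ρ * ‖y‖))
    (S : ℝ → χ → χ)
    (hSdef : ∀ t > (0 : ℝ), ∀ φ, S t φ = ∫ y, K t y • U y φ) :
    (∀ t > (0 : ℝ), ∀ φ : χ, Integrable (fun y => K t y • U y φ)) ∧
    (∀ t > (0 : ℝ), ∀ φ : χ,
      ‖S t φ‖ ≤ a * M * Real.exp (ω * (1 + ρ ^ m) * t) * ‖φ‖) ∧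
    (∀ s > (0 : ℝ), ∀ t > (0 : ℝ), ∀ φ : χ, S s (S t φ) = S (s + t) φ) := by
  have hw : AEStronglyMeasurable (fun y : EuclideanSpace ℝ (Fin d) => Real.exp (ρ * ‖y‖)) :=
    (by fun_prop : Continuous _).aestronglyMeasurable
  have hw0 (y : EuclideanSpace ℝ (Fin d)) : 0 ≤ Real.exp (ρ * ‖y‖) := (Real.exp_pos _).le
  have hK (t : ℝ) (ht : 0 < t) : AEStronglyMeasurable (K t) := (hKmeas t ht).aestronglyMeasurable
  have hKw (t : ℝ) (ht : 0 < t) : Integrable fun y => ‖K t y‖ * Real.exp (ρ * ‖y‖) :=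
    integrable_norm_mul_of_lintegral_le (hK t ht) hw hw0 (hKint t ht)
  have hU (φ : χ) := (hUcont φ).stronglyMeasurable
  refine ⟨fun t ht φ => integrable_smul_apply (hK t ht) (hKw t ht) hUnorm (hU φ), ?_, ?_⟩
  · intro t ht φ
    have hM : 0 ≤ M := by simpa using (norm_nonneg _).trans (hUnorm 0)
    rw [hSdef t ht]
    calc _ ≤ M * (∫ y, ‖K t y‖ * Real.exp (ρ * ‖y‖)) * ‖φ‖ :=
          norm_integral_smul_apply_le (hKw t ht) hUnorm φ
      _ ≤ M * (a * Real.exp (ω * (1 + ρ ^ m) * t)) * ‖φ‖ := by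
          gcongr
          exact integral_norm_mul_le_of_lintegral_le (hK t ht) hw hw0 (by positivity) (hKint t ht)
      _ = _ := by ring
  · intro s hs t ht φ
    rw [hSdef s hs, hSdef t ht, hSdef (s + t) (by positivity),
      integral_smul_apply_integral_smul_apply hUadd hUnorm (hK s hs) (hK t ht) (hKw s hs)
        (hKw t ht) (hU φ)]
    simp_rw [hKconv s hs t ht]

theorem stmt12 {χ : Type*} [NormedAddCommGroup χ] [NormedSpace ℂ χ] [CompleteSpace χ]
    (d : ℕ) (m a ω ρ M : ℝ)
    (hm : 1 ≤ m) (ha : 0 < a) (hω : 0 ≤ ω) (hρ : 0 ≤ ρ) (hM : 1 ≤ M)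
    (K : ℝ → EuclideanSpace ℝ (Fin d) → ℂ)
    (hKmeas : ∀ t > (0 : ℝ), Measurable (K t))
    -- convolution semigroup property
    (hKconv : ∀ s > (0 : ℝ), ∀ t > (0 : ℝ), ∀ x,
      K (s + t) x = ∫ z, K s z * K t (x - z))
    -- weighted L¹ bound
    (hKint : ∀ t > (0 : ℝ),
      ∫⁻ y, (‖K t y‖₊ : ENNReal) * ENNReal.ofReal (Real.exp (ρ * ‖y‖)) ≤
        ENNReal.ofReal (a * Real.exp (ω * (1 + ρ ^ m) * t)))
    -- strongly continuous representation of ℝ^d with exponential growth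
    (U : EuclideanSpace ℝ (Fin d) → χ →L[ℂ] χ)
    (hU0 : U 0 = ContinuousLinearMap.id ℂ χ)
    (hUadd : ∀ y z, U (y + z) = (U y).comp (U z))
    (hUcont : ∀ φ : χ, Continuous fun y => U y φ)
    (hUnorm : ∀ y, ‖U y‖ ≤ M * Real.exp (ρ * ‖y‖))
    (S : ℝ → χ → χ)
    (hSdef : ∀ t > (0 : ℝ), ∀ φ, S t φ = ∫ y, K t y • U y φ) :
    (∀ t > (0 : ℝ), ∀ φ : χ, Integrable (fun y => K t y • U y φ)) ∧
    (∀ t > (0 : ℝ), ∀ φ : χ,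
      ‖S t φ‖ ≤ a * M * Real.exp (ω * (1 + ρ ^ m) * t) * ‖φ‖) ∧
    (∀ s > (0 : ℝ), ∀ t > (0 : ℝ), ∀ φ : χ, S s (S t φ) = S (s + t) φ) :=
  stmt12_general d m a ω ρ M ha K hKmeas hKconv hKint U hUadd hUcont hUnorm S hSdef
end
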